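/- arXiv:1401.2976 — 11 statements merged into one kernel-verified Lean document; each statement's English description precedes it below -/
import Mathlib

section
/- Let G be a topological group, let n, r be natural numbers, and let ρ : G →* (V ≃ₗ[ℂ] V) be a linear action of G on V = (Fin n → ℂ). For each i ∈ Fin r let fᵢ ∈ MvPolynomial (Fin n) ℂ be an irreducible homogeneous polynomial (say of degree dᵢ) that is a relative invariant with character χᵢ : G →* ℂˣ, where each χᵢ is continuous. Assume that for each i there is a point vᵢ ∈ V such that: fᵢ(vᵢ) = 0; fⱼ(vᵢ) ≠ 0 for every j ≠ i; every polynomial p ∈ MvPolynomial (Fin n) ℂ that vanishes at ρ(g)vᵢ for all g ∈ G is divisible by fᵢ; and there exists an element g in the connected component of the identity of the stabilizer set {g : ρ(g)vᵢ = vᵢ} (with the subspace topology from G) such that χᵢ(g) ≠ 1. Let k : Fin r → ℕ, set F = ∏ᵢ fᵢ^{kᵢ}, let h₁ ∈ MvPolynomial (Fin n) ℂ be homogeneous of degree ∑ᵢ kᵢ·dᵢ with h₁ and F relatively prime (IsRelPrime h₁ F), and let Φ : G → ℂ satisfy h₁(ρ(g)v) = (∏ᵢ χᵢ(g)^{kᵢ})·(F(v)·Φ(g)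 + h₁(v)) for all g ∈ G and v ∈ V. Then Φ(g) = 0 for every g ∈ G. -/
/-!
If `kᵢ ≠ 0`, then `F = ∏ fⱼ ^ kⱼ` vanishes at `vᵢ`, and on the isotropy group of `vᵢ` the
functional equation at `vᵢ` reads `h₁(vᵢ) = χᵢ(g) ^ kᵢ · h₁(vᵢ)`, because the other characters
are trivial there (`fⱼ(vᵢ) ≠ 0`). A continuous character with values in the finite set of
`kᵢ`-th roots of unity is constant on the identity component, so `h₁(vᵢ) = 0`. The functional
equation then makes `h₁` vanish on the orbit of `vᵢ`, so `fᵢ` divides both `h₁` and `F`,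
contradicting coprimality. Hence all `kᵢ = 0`, `F = 1`, and evaluating at `0` gives `Φ = 0`.
-/

open MvPolynomial

theorem exists_pow_ne_one_of_mem_connectedComponent {X K : Type*} [TopologicalSpace X]
    [CommRing K] [IsDomain K] [TopologicalSpace K] [T1Space K] {c : X → K} (hc : Continuous c)
    {x y : X} (hy : y ∈ connectedComponent x) (hxy : c y ≠ c x) {m : ℕ} (hm : m ≠ 0) :
    ∃ z, c z ^ m ≠ 1 := by
  by_contra! h
  exact hxy <| isPreconnected_connectedComponent.constant_of_mapsTo
    (Polynomial.nthRootsFinset m (1 : K)).finite_toSet.isDiscrete hc.continuousOn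
    (fun z _ => (Polynomial.mem_nthRootsFinset hm.bot_lt 1).2 (h z)) hy mem_connectedComponent

theorem exponent_eq_zero_of_isRelPrime {G σ K ι : Type*} [CommRing K] [IsDomain K] [Fintype ι]
    {act : G → (σ → K) → (σ → K)} {f : ι → MvPolynomial σ K} {χ : ι → G → K}
    (hrel : ∀ j g w, eval (act g w) (f j) = χ j g * eval w (f j))
    {i : ι} {v : σ → K} (hirr : Irreducible (f i)) (hvzero : eval v (f i) = 0)
    (hvne : ∀ j, j ≠ i → eval v (f j) ≠ 0)
    (hdense : ∀ p, (∀ g, eval (act g v) p = 0) → f i ∣ p)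
    (hχ : ∀ m ≠ 0, ∃ g, act g v = v ∧ χ i g ^ m ≠ 1)
    {k : ι → ℕ} {h₁ : MvPolynomial σ K} (hrp : IsRelPrime h₁ (∏ j, f j ^ k j)) {Φ : G → K}
    (hΦ : ∀ g w, eval (act g w) h₁ =
      (∏ j, χ j g ^ k j) * (eval w (∏ j, f j ^ k j) * Φ g + eval w h₁)) :
    k i = 0 := by
  by_contra hki
  have hFv : eval v (∏ j, f j ^ k j) = 0 := by
    rw [map_prod]
    exact Finset.prod_eq_zero (Finset.mem_univ i) (by rw [map_pow, hvzero, zero_pow hki])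
  have hh₁v : eval v h₁ = 0 := by
    by_contra hne
    obtain ⟨g, hg, hχg⟩ := hχ (k i) hki
    have hχj : ∀ j ≠ i, χ j g = 1 := fun j hj =>
      (mul_eq_right₀ (hvne j hj)).1 (by rw [← hrel, hg])
    have hprod : ∏ j, χ j g ^ k j = χ i g ^ k i :=
      Finset.prod_eq_single_of_mem i (Finset.mem_univ i) fun j _ hj => by rw [hχj j hj, one_pow]
    have hfix := hΦ g v
    rw [hg, hFv, zero_mul, zero_add, hprod] at hfix
    exact hχg ((mul_eq_right₀ hne).1 hfix.symm)
  have hdvd : f i ∣ h₁ := hdense h₁ fun g => by rw [hΦ, hFv, hh₁v]; ring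
  exact hirr.not_isUnit <| hrp hdvd <|
    (dvd_pow_self _ hki).trans (Finset.dvd_prod_of_mem _ (Finset.mem_univ i))

/-- A prehomogeneous vector space defining a linear free divisor has no nontrivial
additive relative invariants: under the hypotheses encoding Brion's criterion
(generic points `v i` on the irreducible hypersurface components, Zariski density of their
orbits, and nontriviality of the character `χ i` on the identity component of the
isotropy group at `v i`), any additive function `Φ` satisfying the global equation of an
additive relative invariant `h₁ / ∏ i, (f i) ^ (k i)` is identically zero. -/
theorem no_nontrivial_additive_relative_invariants_of_linear_free_divisor
    {G : Type*} [Group G] [TopologicalSpace G]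
    (n r : ℕ) (ρ : G →* ((Fin n → ℂ) ≃ₗ[ℂ] (Fin n → ℂ)))
    (f : Fin r → MvPolynomial (Fin n) ℂ) (χ : Fin r → (G →* ℂˣ))
    (hχcont : ∀ i, Continuous fun g => χ i g)
    (hirr : ∀ i, Irreducible (f i))
    (hrel : ∀ i (g : G) (w : Fin n → ℂ),
      eval (ρ g w) (f i) = (χ i g : ℂ) * eval w (f i))
    (v : Fin r → (Fin n → ℂ))
    (hvzero : ∀ i, eval (v i) (f i) = 0)
    (hvne : ∀ i j, j ≠ i → eval (v i) (f j) ≠ 0)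
    (hdense : ∀ i (p : MvPolynomial (Fin n) ℂ),
      (∀ g : G, eval (ρ g (v i)) p = 0) → f i ∣ p)
    (hnontriv : ∀ i, ∃ s : {g : G // ρ g (v i) = v i},
      s ∈ connectedComponent (⟨1, by simp⟩ : {g : G // ρ g (v i) = v i}) ∧
      χ i s.1 ≠ 1)
    (k : Fin r → ℕ) (h₁ : MvPolynomial (Fin n) ℂ)
    (hrp : IsRelPrime h₁ (∏ i, (f i) ^ (k i)))
    (Φ : G → ℂ)
    (hΦ : ∀ (g : G) (w : Fin n → ℂ),
      eval (ρ g w) h₁ =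
        (∏ i, ((χ i g : ℂ)) ^ (k i)) *
          (eval w (∏ i, (f i) ^ (k i)) * Φ g + eval w h₁)) :
    ∀ g : G, Φ g = 0 := by
  have hk : ∀ i, k i = 0 := fun i => by
    refine exponent_eq_zero_of_isRelPrime (act := fun g w => ρ g w)
      (χ := fun j g => (χ j g : ℂ)) hrel (hirr i) (hvzero i) (hvne i) (hdense i)
      (fun m hm => ?_) hrp hΦ
    obtain ⟨s, hs, hχs⟩ := hnontriv i
    obtain ⟨t, ht⟩ := exists_pow_ne_one_of_mem_connectedComponent
      (c := fun t : {g : G // ρ g (v i) = v i} => (χ i t.1 : ℂ))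
      (Units.continuous_val.comp ((hχcont i).comp continuous_subtype_val)) hs
      (fun h => hχs (Units.ext (h.trans (by simp)))) hm
    exact ⟨t.1, t.2, ht⟩
  intro g
  simpa [hk] using hΦ g 0
end

section
/- Let G be a group, r a natural number, and for each i ∈ Fin r let χᵢ : G →* ℂˣ be a group homomorphism and Kᵢ ≤ G a subgroup. Let N = ⋂ᵢ ker χᵢ. Assume: (a) for each i, the restriction of χᵢ to Kᵢ is surjective onto ℂˣ; and (b) Kⱼ ≤ ker χᵢ whenever i ≠ j. Then: (existence) every g ∈ G can be written g = n·k₀·k₁⋯k_{r−1} with n ∈ N and kᵢ ∈ Kᵢ, the product taken in increasing order of i; (uniqueness modulo N) for any such expression, χᵢ(kᵢ) = χᵢ(g) for every i, so for two expressions g = n·k₀⋯k_{r−1} = n'·k₀'⋯k_{r−1}' one has (kᵢ')⁻¹·kᵢ ∈ Kᵢ ⊓ N for every i; (count) if moreover each Kᵢ ⊓ ker χᵢ is finite, then for each g the set of tuples (n, k₀, …, k_{r−1}) ∈ N × K₀ × ⋯ × K_{r−1} with g = n·k₀⋯k_{r−1} is finite of cardinality ∏ᵢ (card of Kᵢ ⊓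 ker χᵢ). -/
private lemma chi_prod_aux {G : Type*} [Group G] {r : ℕ} (χ : Fin r → (G →* ℂˣ))
    (K : Fin r → Subgroup G) (hker : ∀ i j, i ≠ j → K j ≤ (χ i).ker)
    (kk : Fin r → G) (hkk : ∀ i, kk i ∈ K i) (i : Fin r) :
    χ i (List.ofFn kk).prod = χ i (kk i) := by
  rw [map_list_prod, List.map_ofFn, List.prod_ofFn]
  exact Finset.prod_eq_single i
    (fun j _ hj => hker i j (Ne.symm hj) (hkk j)) (by simp)

/-- Every element of `G` may be written, in a finite number of ways, as a product
`n * k₀ * k₁ * ⋯ * k_{r-1}` with `n ∈ N = ⋂ᵢ ker χᵢ` and `kᵢ ∈ Kᵢ`, each factor being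
unique modulo `N`; the number of such expressions is `∏ᵢ |Kᵢ ⊓ ker χᵢ|`. -/
theorem product_decomposition_of_linear_free_divisor_group
    {G : Type*} [Group G] (r : ℕ)
    (χ : Fin r → (G →* ℂˣ)) (K : Fin r → Subgroup G)
    (N : Subgroup G) (hN : N = ⨅ i, (χ i).ker)
    (hsurj : ∀ i, ∀ u : ℂˣ, ∃ g ∈ K i, χ i g = u)
    (hker : ∀ i j, i ≠ j → K j ≤ (χ i).ker) :
    -- existence
    (∀ g : G, ∃ (nn : G) (kk : Fin r → G),
      nn ∈ N ∧ (∀ i, kk i ∈ K i) ∧ g = nn * (List.ofFn kk).prod) ∧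
    -- each factor satisfies χᵢ(kᵢ) = χᵢ(g)
    (∀ (g nn : G) (kk : Fin r → G), nn ∈ N → (∀ i, kk i ∈ K i) →
      g = nn * (List.ofFn kk).prod → ∀ i, χ i (kk i) = χ i g) ∧
    -- uniqueness modulo N
    (∀ (g nn nn' : G) (kk kk' : Fin r → G), nn ∈ N → nn' ∈ N →
      (∀ i, kk i ∈ K i) → (∀ i, kk' i ∈ K i) →
      g = nn * (List.ofFn kk).prod → g = nn' * (List.ofFn kk').prod →
      ∀ i, (kk' i)⁻¹ * kk i ∈ K i ⊓ N) ∧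
    -- count
    ((∀ i, ((K i ⊓ (χ i).ker : Subgroup G) : Set G).Finite) →
      ∀ g : G,
        ({p : G × (Fin r → G) |
            p.1 ∈ N ∧ (∀ i, p.2 i ∈ K i) ∧ g = p.1 * (List.ofFn p.2).prod}).Finite ∧
        Nat.card ({p : G × (Fin r → G) |
            p.1 ∈ N ∧ (∀ i, p.2 i ∈ K i) ∧ g = p.1 * (List.ofFn p.2).prod} : Set _) =
          ∏ i, Nat.card (K i ⊓ (χ i).ker : Subgroup G)) := by
  have hNker : ∀ i, N ≤ (χ i).ker := by
    intro i
    rw [hN]; exact iInf_le _ i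
  -- part 2
  have hchi : ∀ (g nn : G) (kk : Fin r → G), nn ∈ N → (∀ i, kk i ∈ K i) →
      g = nn * (List.ofFn kk).prod → ∀ i, χ i (kk i) = χ i g := by
    intro g nn kk hn hkk hg i
    rw [hg, map_mul, hNker i hn, one_mul, chi_prod_aux χ K hker kk hkk i]
  -- part 1
  have hex : ∀ g : G, ∃ (nn : G) (kk : Fin r → G),
      nn ∈ N ∧ (∀ i, kk i ∈ K i) ∧ g = nn * (List.ofFn kk).prod := by
    intro g
    choose k hk1 hk2 using fun i => hsurj i (χ i g)
    refine ⟨g * ((List.ofFn k).prod)⁻¹, k, ?_, hk1, by group⟩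
    rw [hN, Subgroup.mem_iInf]
    intro i
    rw [MonoidHom.mem_ker, map_mul, map_inv, chi_prod_aux χ K hker k hk1 i, hk2 i,
      mul_inv_cancel]
  -- part 3
  have huniq : ∀ (g nn nn' : G) (kk kk' : Fin r → G), nn ∈ N → nn' ∈ N →
      (∀ i, kk i ∈ K i) → (∀ i, kk' i ∈ K i) →
      g = nn * (List.ofFn kk).prod → g = nn' * (List.ofFn kk').prod →
      ∀ i, (kk' i)⁻¹ * kk i ∈ K i ⊓ N := by
    intro g nn nn' kk kk' hn hn' hkk hkk' hg hg' i
    have hmN : (kk' i)⁻¹ * kk i ∈ N := by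
      rw [hN, Subgroup.mem_iInf]
      intro j
      rw [MonoidHom.mem_ker, map_mul, map_inv]
      rcases eq_or_ne j i with rfl | hji
      · rw [hchi g nn kk hn hkk hg j, hchi g nn' kk' hn' hkk' hg' j, inv_mul_cancel]
      · rw [hker j i (hji) (hkk i), hker j i (hji) (hkk' i), inv_one, one_mul]
    exact ⟨(K i).mul_mem ((K i).inv_mem (hkk' i)) (hkk i), hmN⟩
  refine ⟨hex, hchi, huniq, ?_⟩
  -- part 4
  intro hfin g
  obtain ⟨n₀, k₀, hn₀, hk₀, hg₀⟩ := hex g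
  haveI : ∀ i, Finite (K i ⊓ (χ i).ker : Subgroup G) := fun i => (hfin i).to_subtype
  -- membership helpers for the inverse map
  have hmemN : ∀ (d : ∀ i, (K i ⊓ (χ i).ker : Subgroup G)),
      g * ((List.ofFn fun i => k₀ i * (d i : G)).prod)⁻¹ ∈ N := by
    intro d
    rw [hN, Subgroup.mem_iInf]
    intro i
    have hkmem : ∀ j, k₀ j * (d j : G) ∈ K j := fun j =>
      (K j).mul_mem (hk₀ j) ((d j).2.1)
    rw [MonoidHom.mem_ker, map_mul, map_inv,
      chi_prod_aux χ K hker _ hkmem i, map_mul, ((d i).2.2 : χ i (d i : G) = 1),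
      mul_one, hchi g n₀ k₀ hn₀ hk₀ hg₀ i, mul_inv_cancel]
  set S : Set (G × (Fin r → G)) :=
    {p : G × (Fin r → G) |
      p.1 ∈ N ∧ (∀ i, p.2 i ∈ K i) ∧ g = p.1 * (List.ofFn p.2).prod} with hS
  have e : S ≃ (∀ i, (K i ⊓ (χ i).ker : Subgroup G)) :=
    { toFun := fun p i => ⟨(k₀ i)⁻¹ * p.1.2 i, by
        have h := huniq g p.1.1 n₀ p.1.2 k₀ p.2.1 hn₀ p.2.2.1 hk₀ p.2.2.2 hg₀ i
        exact ⟨h.1, hNker i h.2⟩⟩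
      invFun := fun d => ⟨(g * ((List.ofFn fun i => k₀ i * (d i : G)).prod)⁻¹,
          fun i => k₀ i * (d i : G)),
        hmemN d, fun i => (K i).mul_mem (hk₀ i) ((d i).2.1), by group⟩
      left_inv := by
        rintro ⟨⟨n, k⟩, hn, hk, hgk⟩
        ext
        · simp only [mul_inv_cancel_left]
          rw [hgk]; group
        · simp only
          group
      right_inv := by
        intro d
        funext i
        ext
        simp only
        group }
  have hfinS : Finite S := Finite.of_equiv _ e.symm
  refine ⟨Set.finite_coe_iff.mp hfinS, ?_⟩
  rw [Nat.card_congr e, Nat.card_pi]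
end

section
/- Let G be a group, r a natural number, and for each i ∈ Fin r let χᵢ : G →* ℂˣ be a group homomorphism and Kᵢ ≤ G a subgroup. Let N = ⋂ᵢ ker χᵢ. Assume: (a) for each i, the restriction of χᵢ to Kᵢ is surjective onto ℂˣ; and (b) Kⱼ ≤ ker χᵢ whenever i ≠ j. Then for every subset S ⊆ Fin r, an element g ∈ G satisfies χᵢ(g) = 1 for all i ∈ S if and only if g can be written as g = n·∏_{j ∉ S} kⱼ with n ∈ N and kⱼ ∈ Kⱼ for each j ∉ S (product over the complement of S in increasing order of j). In particular {g : ∀ i ∈ S, χᵢ(g) = 1} is a normal subgroup of G. -/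
/-!
A character `χᵢ` kills every `Kⱼ` with `j ≠ i`, so on a product `∏ⱼ kⱼ` it only sees the factor
`kᵢ`. Given `g` with `χᵢ g = 1` for `i ∈ S`, surjectivity of `χⱼ` on `Kⱼ` yields `kⱼ ∈ Kⱼ` with
`χⱼ kⱼ = χⱼ g` for `j ∉ S`; then `g (∏ⱼ kⱼ)⁻¹` lies in every kernel. The stabilizer is the kernel
of `(χᵢ)_{i ∈ S}`, hence normal.
-/

theorem MonoidHom.map_prod_ofFn_of_forall_ne {G M : Type*} [Monoid G] [CommMonoid M] {r : ℕ}
    (φ : G →* M) (f : Fin r → G) (i : Fin r) (h : ∀ j ≠ i, φ (f j) = 1) :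
    φ (List.ofFn f).prod = φ (f i) := by
  rw [map_list_prod, List.map_ofFn, List.prod_ofFn]
  exact Finset.prod_eq_single i (fun j _ hj => h j hj) (by simp)

section Characters

variable {G : Type*} [Group G] {r : ℕ} {χ : Fin r → (G →* ℂˣ)} {K : Fin r → Subgroup G}

theorem map_prod_ofFn_of_mem (hker : ∀ i j, i ≠ j → K j ≤ (χ i).ker)
    {kk : Fin r → G} (hkK : ∀ j, kk j ∈ K j) (i : Fin r) :
    χ i (List.ofFn kk).prod = χ i (kk i) :=
  (χ i).map_prod_ofFn_of_forall_ne kk i fun j hj => hker i j (Ne.symm hj) (hkK j)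

theorem exists_mem_map_eq_of_notMem (hsurj : ∀ i, ∀ u : ℂˣ, ∃ g ∈ K i, χ i g = u)
    (S : Set (Fin r)) (g : G) :
    ∃ kk : Fin r → G, (∀ j, kk j ∈ K j) ∧ (∀ j ∈ S, kk j = 1) ∧ ∀ j ∉ S, χ j (kk j) = χ j g := by
  classical
  choose k hkK hkχ using fun j => hsurj j (χ j g)
  refine ⟨fun j => if j ∈ S then 1 else k j, fun j => ?_, fun j hj => if_pos hj,
    fun j hj => by simp only [if_neg hj, hkχ]⟩
  dsimp only
  split_ifs
  exacts [(K j).one_mem, hkK j]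

end Characters

/-- The subgroup of `G` leaving invariant the level sets of `fᵢ` for `i ∈ S`, i.e.
`{g | ∀ i ∈ S, χᵢ(g) = 1}`, consists exactly of the products `n * ∏_{j ∉ S} kⱼ` with
`n ∈ N = ⋂ᵢ ker χᵢ` and `kⱼ ∈ Kⱼ` (encoded by taking `kⱼ = 1` for `j ∈ S`), and is a
normal subgroup of `G`. -/
theorem level_set_stabilizer_of_linear_free_divisor_group
    {G : Type*} [Group G] (r : ℕ)
    (χ : Fin r → (G →* ℂˣ)) (K : Fin r → Subgroup G)
    (N : Subgroup G) (hN : N = ⨅ i, (χ i).ker)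
    (hsurj : ∀ i, ∀ u : ℂˣ, ∃ g ∈ K i, χ i g = u)
    (hker : ∀ i j, i ≠ j → K j ≤ (χ i).ker)
    (S : Set (Fin r)) :
    (∀ g : G, (∀ i ∈ S, χ i g = 1) ↔
      ∃ (nn : G) (kk : Fin r → G), nn ∈ N ∧ (∀ j, kk j ∈ K j) ∧ (∀ j ∈ S, kk j = 1) ∧
        g = nn * (List.ofFn kk).prod) ∧
    ∃ H : Subgroup G, H.Normal ∧ ∀ g : G, g ∈ H ↔ (∀ i ∈ S, χ i g = 1) := by
  subst hN
  refine ⟨fun g => ⟨fun hg => ?_, ?_⟩, ⟨(MonoidHom.pi fun i : S => χ i).ker, inferInstance,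
    fun g => by simp [MonoidHom.mem_ker, funext_iff]⟩⟩
  · obtain ⟨kk, hkK, hkS, hkχ⟩ := exists_mem_map_eq_of_notMem hsurj S g
    refine ⟨g * (List.ofFn kk).prod⁻¹, kk, Subgroup.mem_iInf.2 fun i => ?_, hkK, hkS, by group⟩
    rw [MonoidHom.mem_ker, map_mul, map_inv, map_prod_ofFn_of_mem hker hkK, mul_inv_eq_one]
    by_cases hi : i ∈ S
    · rw [hg i hi, hkS i hi, map_one]
    · exact (hkχ i hi).symm
  · rintro ⟨nn, kk, hnn, hkK, hkS, rfl⟩ i hi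
    rw [map_mul, map_prod_ofFn_of_mem hker hkK, hkS i hi, (Subgroup.mem_iInf.1 hnn i), map_one,
      one_mul]
end

section
/- Let G be a group, R a normal subgroup of G, and L a subgroup of G such that every element of G is a product r·l with r ∈ R and l ∈ L, and such that R is contained in the commutator subgroup ⁅G,G⁆ of G. Then the commutator subgroup of G equals the product R·⁅L,L⁆: that is, ⁅G,G⁆ = R ⊔ ⁅L,L⁆ as subgroups of G, and every element of ⁅G,G⁆ can be written as r·l with r ∈ R and l ∈ ⁅L,L⁆ (where ⁅L,L⁆ denotes the commutator subgroup of the subgroup L, viewed as a subgroup of G). -/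
/-- If `G = R ⋅ L` with `R` normal and `R ≤ ⁅G,G⁆`, then `⁅G,G⁆ = R ⋅ ⁅L,L⁆`. -/
theorem commutator_eq_of_levi_decomposition
    {G : Type*} [Group G] (R : Subgroup G) [R.Normal] (L : Subgroup G)
    (hprod : ∀ g : G, ∃ x ∈ R, ∃ l ∈ L, g = x * l)
    (hRsub : R ≤ commutator G) :
    commutator G = R ⊔ ⁅L, L⁆ ∧
    ∀ g ∈ commutator G, ∃ x ∈ R, ∃ l ∈ (⁅L, L⁆ : Subgroup G), g = x * l := by
  set π := QuotientGroup.mk' R with hπ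
  have hLtop : Subgroup.map π L = ⊤ := by
    rw [eq_top_iff]
    rintro q -
    obtain ⟨g, rfl⟩ := QuotientGroup.mk'_surjective R q
    obtain ⟨x, hx, l, hl, rfl⟩ := hprod g
    refine ⟨l, hl, ?_⟩
    simp [π, QuotientGroup.mk'_apply, QuotientGroup.eq, mul_assoc]
    simpa using R.inv_mem hx
  have hmap : Subgroup.map π ⁅L, L⁆ = Subgroup.map π (commutator G) := by
    rw [Subgroup.map_commutator, hLtop, commutator_def, Subgroup.map_commutator,
      Subgroup.map_top_of_surjective π (QuotientGroup.mk'_surjective R)]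
  have key : ∀ g ∈ commutator G, ∃ x ∈ R, ∃ l ∈ (⁅L, L⁆ : Subgroup G), g = x * l := by
    intro g hg
    have : π g ∈ Subgroup.map π ⁅L, L⁆ := hmap ▸ ⟨g, hg, rfl⟩
    obtain ⟨l, hl, hpl⟩ := this
    refine ⟨g * l⁻¹, ?_, l, hl, by group⟩
    have : π (g * l⁻¹) = 1 := by
      rw [map_mul, map_inv, hpl, mul_inv_cancel]
    exact (QuotientGroup.eq_one_iff _).mp this
  constructor
  · apply le_antisymm
    · intro g hg
      obtain ⟨x, hx, l, hl, rfl⟩ := key g hg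
      exact mul_mem (Subgroup.mem_sup_left hx) (Subgroup.mem_sup_right hl)
    · refine sup_le hRsub ?_
      rw [commutator_def]
      exact Subgroup.commutator_mono le_top le_top
  · exact key
end

section
/- Let G be a group and K a subgroup of the center of G such that every element of G can be written as k·h with k ∈ K and h in the commutator subgroup ⁅G,G⁆. Then the commutator subgroup of G is perfect: ⁅⁅G,G⁆, ⁅G,G⁆⁆ = ⁅G,G⁆. -/
open scoped commutatorElement

open Subgroup

section CentralFactor

variable {G : Type*} [Group G]

theorem commutatorElement_central_mul_left {z : G} (hz : z ∈ center G) (a b : G) :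
    ⁅z * a, b⁆ = ⁅a, b⁆ := by
  have hcomm : ∀ g : G, Commute z g := fun g => (mem_center_iff.mp hz g).symm
  rw [commutatorElement_mul_left_eq_conj_mul, commutatorElement_eq_one_iff_commute.mpr (hcomm b),
    mul_one, (hcomm _).eq, mul_inv_cancel_right]

theorem commutatorElement_central_mul_right {z : G} (hz : z ∈ center G) (a b : G) :
    ⁅a, z * b⁆ = ⁅a, b⁆ := by
  rw [← commutatorElement_inv, commutatorElement_central_mul_left hz, commutatorElement_inv]

theorem commutator_eq_commutator_of_forall_eq_central_mul {H : Subgroup G}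
    (hG : ∀ g : G, ∃ z ∈ center G, ∃ x ∈ H, g = z * x) : commutator G = ⁅H, H⁆ := by
  refine le_antisymm ?_ (commutator_mono le_top le_top)
  rw [commutator_def, commutator_le]
  rintro g₁ - g₂ -
  obtain ⟨z₁, hz₁, x₁, hx₁, rfl⟩ := hG g₁
  obtain ⟨z₂, hz₂, x₂, hx₂, rfl⟩ := hG g₂
  rw [commutatorElement_central_mul_left hz₁, commutatorElement_central_mul_right hz₂]
  exact commutator_mem_commutator hx₁ hx₂

end CentralFactor

/-- If `G = K ⋅ ⁅G,G⁆` with `K` central, then the commutator subgroup of `G` is perfect. -/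
theorem commutator_perfect_of_central_complement
    {G : Type*} [Group G] (K : Subgroup G) (hK : K ≤ Subgroup.center G)
    (hprod : ∀ g : G, ∃ k ∈ K, ∃ h ∈ commutator G, g = k * h) :
    ⁅commutator G, commutator G⁆ = commutator G := by
  refine (commutator_eq_commutator_of_forall_eq_central_mul fun g => ?_).symm
  obtain ⟨k, hk, h, hh, rfl⟩ := hprod g
  exact ⟨k, hK hk, h, hh, rfl⟩
end

section
/- Let n be a natural number, G a group, and ρ : G →* (V ≃ₗ[ℂ] V) a linear action of G on V = (Fin n → ℂ). Let v₀ ∈ V, let Ω = {ρ(g)v₀ : g ∈ G} be the orbit of v₀, and assume t·v ∈ Ω for every v ∈ Ω and every nonzero t ∈ ℂ. Let p, q ∈ MvPolynomial (Fin n) ℂ with q(v) ≠ 0 for all v ∈ Ω, and let Φ : G → ℂ satisfy p(ρ(g)v)/q(ρ(g)v) − p(v)/q(v) = Φ(g) for all g ∈ G and v ∈ Ω. Then the rational function p/q is homogeneous of degree 0 on Ω: p(t·v)/q(t·v) = p(v)/q(v) for every nonzero t ∈ ℂ and every v ∈ Ω. -/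
/-!
Put `f = p / q`. Comparing the defining relation of `Φ` at `t • v₀` and at `v₀` shows that the
increment `f (t • v) - f v` is the same for every `v ∈ Ω`; call it `φ t`. Applying this at
`v = t • v₀` gives `φ (t ^ 2) = 2 * φ t`. Restricting `p` and `q` to the line `ℂ • v₀` makes `φ`
a rational function of `t`, and a rational function with `φ (t ^ 2) = 2 * φ t` vanishes: after
clearing denominators, the leading coefficients of the two sides differ by the factor `2`.
-/

open MvPolynomial

theorem MvPolynomial.exists_eval_smul_eq_eval {σ R : Type*} [CommSemiring R]
    (f : MvPolynomial σ R) (v : σ → R) :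
    ∃ P : Polynomial R, ∀ t : R, eval (t • v) f = P.eval t := by
  refine ⟨aeval (fun i => Polynomial.X * Polynomial.C (v i)) f, fun t => ?_⟩
  rw [← Polynomial.coe_aeval_eq_eval, comp_aeval_apply]
  simp only [map_mul, Polynomial.aeval_X, Polynomial.aeval_C, Algebra.algebraMap_self,
    RingHom.id_apply, aeval_eq_eval]
  rfl

namespace Polynomial

theorem eq_zero_of_comp_X_sq_mul_eq {R : Type*} [CommRing R] [IsDomain R]
    {P Q : R[X]} (hQ : Q ≠ 0)
    (h : P.comp (X ^ 2) * Q = C 2 * (P * Q.comp (X ^ 2))) : P = 0 := by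
  have hX2 : ((X : R[X]) ^ 2).natDegree ≠ 0 := by simp
  have hlc := congrArg leadingCoeff h
  simp only [leadingCoeff_mul, leadingCoeff_comp hX2, leadingCoeff_X_pow, one_pow, mul_one,
    leadingCoeff_C] at hlc
  have : P.leadingCoeff * Q.leadingCoeff = 0 := by linear_combination -hlc
  simpa [hQ] using this

theorem eq_zero_of_eval_sq_div_eq_two_mul {K : Type*} [Field K] [Infinite K]
    {P Q : K[X]} (hQ : ∀ t ≠ 0, Q.eval t ≠ 0)
    (h : ∀ t ≠ 0, P.eval (t ^ 2) / Q.eval (t ^ 2) = 2 * (P.eval t / Q.eval t)) : P = 0 := by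
  have hQne : Q ≠ 0 := fun h0 => hQ 1 one_ne_zero (by rw [h0, eval_zero])
  refine eq_zero_of_comp_X_sq_mul_eq hQne <| eq_of_infinite_eval_eq _ _ <|
    (Set.finite_singleton 0).infinite_compl.mono fun t (ht : t ≠ 0) => ?_
  have hsq := h t ht
  field_simp [hQ t ht, hQ _ (pow_ne_zero 2 ht)] at hsq
  simp only [Set.mem_ofPred_eq, eval_mul, eval_comp, eval_pow, eval_X, eval_C]
  linear_combination hsq

end Polynomial

/-- An additive relative invariant `p/q` is homogeneous of degree `0` on the orbit `Ω`. -/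
theorem additive_relative_invariant_homogeneous_degree_zero
    (n : ℕ) {G : Type*} [Group G]
    (ρ : G →* ((Fin n → ℂ) ≃ₗ[ℂ] (Fin n → ℂ)))
    (v₀ : Fin n → ℂ)
    (Ω : Set (Fin n → ℂ)) (hΩ : Ω = {v | ∃ g : G, ρ g v₀ = v})
    (hscal : ∀ v ∈ Ω, ∀ t : ℂ, t ≠ 0 → t • v ∈ Ω)
    (p q : MvPolynomial (Fin n) ℂ)
    (hq : ∀ v ∈ Ω, eval v q ≠ 0)
    (Φ : G → ℂ)
    (hΦ : ∀ g : G, ∀ v ∈ Ω,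
      eval (ρ g v) p / eval (ρ g v) q - eval v p / eval v q = Φ g) :
    ∀ t : ℂ, t ≠ 0 → ∀ v ∈ Ω,
      eval (t • v) p / eval (t • v) q = eval v p / eval v q := by
  set f : (Fin n → ℂ) → ℂ := fun v => eval v p / eval v q
  have hv₀ : v₀ ∈ Ω := hΩ ▸ ⟨1, by simp⟩
  have hinc : ∀ t : ℂ, t ≠ 0 → ∀ v ∈ Ω, f (t • v) - f v = f (t • v₀) - f v₀ := by
    intro t ht v hv
    rw [hΩ] at hv
    obtain ⟨g, rfl⟩ := hv
    have hgt := hΦ g _ (hscal v₀ hv₀ t ht)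
    rw [map_smul] at hgt
    linear_combination hgt - hΦ g v₀ hv₀
  obtain ⟨P, hP⟩ := exists_eval_smul_eq_eval p v₀
  obtain ⟨Q, hQ⟩ := exists_eval_smul_eq_eval q v₀
  have hQ0 : ∀ t : ℂ, t ≠ 0 → Q.eval t ≠ 0 := fun t ht => hQ t ▸ hq _ (hscal v₀ hv₀ t ht)
  have hR : ∀ t : ℂ, t ≠ 0 →
      (P - Polynomial.C (f v₀) * Q).eval t / Q.eval t = f (t • v₀) - f v₀ := by
    intro t ht
    simp only [f, hP, hQ, Polynomial.eval_sub, Polynomial.eval_mul, Polynomial.eval_C]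
    field_simp [hQ0 t ht]
  have hR0 := Polynomial.eq_zero_of_eval_sq_div_eq_two_mul hQ0 fun t ht => by
    have hsq := hinc t ht (t • v₀) (hscal v₀ hv₀ t ht)
    rw [smul_smul, ← sq] at hsq
    rw [hR t ht, hR _ (pow_ne_zero 2 ht)]
    linear_combination hsq
  intro t ht v hv
  have hv := hinc t ht v hv
  rw [← hR t ht, hR0, Polynomial.eval_zero, zero_div] at hv
  exact sub_eq_zero.mp hv
end

section
/- Let n be a natural number, G a group, and ρ : G →* (V ≃ₗ[ℂ] V) a linear action of G on V = (Fin n → ℂ). Let r be a natural number and for each i ∈ Fin r let fᵢ ∈ MvPolynomial (Fin n) ℂ be an irreducible polynomial, homogeneous of degree dᵢ, such that fᵢ(ρ(g)v) = χᵢ(g)·fᵢ(v) for all g, v, where χᵢ : G →* ℂˣ; assume fᵢ and fⱼ are not associated for i ≠ j. Let k : Fin r → ℕ, set F = ∏ᵢ fᵢ^{kᵢ} and X(g) = ∏ᵢ χᵢ(g)^{kᵢ}, and let h₁ ∈ MvPolynomial (Fin n) ℂ be homogeneous of degree ∑ᵢ kᵢ·dᵢ with h₁ and F relatively prime (IsRelPrime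 h₁ F). Then the following are equivalent: (1) there exists an additive Φ : G → ℂ (Φ(g₁g₂) = Φ(g₁) + Φ(g₂)) such that h₁(ρ(g)v) = X(g)·(F(v)·Φ(g) + h₁(v)) for all g ∈ G, v ∈ V; (2) for every i with kᵢ > 0 and every g ∈ G there exists q ∈ MvPolynomial (Fin n) ℂ with h₁(ρ(g)v) − X(g)·h₁(v) = fᵢ(v)^{kᵢ}·q(v) for all v ∈ V; (3) for every g ∈ G there exists q ∈ MvPolynomial (Fin n) ℂ with h₁(ρ(g)v) − X(g)·h₁(v) = F(v)·q(v) for all v ∈ V. -/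
/-!
Put `D_g = h₁ ∘ ρ(g) − X(g)·h₁`, a polynomial homogeneous of the same degree as `F`; condition (3)
says `F ∣ D_g`. The powers `fᵢ^{kᵢ}` are pairwise coprime, so this is equivalent to (2). If
`F ∣ D_g`, the quotient is homogeneous of degree `0`, i.e. a constant, which we write `X(g)·Φ(g)`;
comparing `h₁ ∘ ρ(g₁g₂)` with `h₁ ∘ ρ(g₁) ∘ ρ(g₂)` at a point where `F ≠ 0`, using that `F` is a
relative invariant with character `X`, shows that `Φ` is additive.
-/

open MvPolynomial

namespace MvPolynomial

theorem exists_isHomogeneous_eval_eq_eval_linearMap {σ R : Type*} [Fintype σ] [CommSemiring R]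
    {p : MvPolynomial σ R} {N : ℕ} (hp : p.IsHomogeneous N) (L : (σ → R) →ₗ[R] (σ → R)) :
    ∃ q : MvPolynomial σ R, q.IsHomogeneous N ∧ ∀ v, eval v q = eval (L v) p := by
  classical
  refine ⟨bind₁ (LinearMap.toMatrix' L).toMvPolynomial p, ?_, fun v => ?_⟩
  · rw [← one_mul N]
    exact hp.aeval _ (Matrix.toMvPolynomial_isHomogeneous _)
  · change aeval v (bind₁ _ p) = aeval (L v) p
    rw [aeval_bind₁]
    congr 2 with i
    rw [← LinearMap.toMatrix'_mulVec]
    exact Matrix.toMvPolynomial_eval_eq_apply _ i v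

variable {σ R : Type*} [CommRing R] [IsDomain R]

theorem IsHomogeneous.exists_eq_mul_C_of_dvd {p q : MvPolynomial σ R} {N : ℕ}
    (hp : p.IsHomogeneous N) (hp0 : p ≠ 0) (hq : q.IsHomogeneous N) (hpq : p ∣ q) :
    ∃ c : R, q = p * C c := by
  obtain ⟨r, rfl⟩ := hpq
  refine ⟨coeff 0 r, ?_⟩
  rcases eq_or_ne r 0 with rfl | hr0
  · simp
  have hdeg : p.totalDegree + r.totalDegree = p.totalDegree := by
    rw [← totalDegree_mul_of_isDomain hp0 hr0, hq.totalDegree (mul_ne_zero hp0 hr0),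
      hp.totalDegree hp0]
  rw [← totalDegree_eq_zero_iff_eq_C.mp (by omega)]

theorem exists_eval_eq_mul_iff_dvd [Infinite R] {P D : MvPolynomial σ R} {φ : (σ → R) → R}
    (hD : ∀ v, eval v D = φ v) :
    (∃ q : MvPolynomial σ R, ∀ v, φ v = eval v P * eval v q) ↔ P ∣ D := by
  simp only [dvd_def, funext_iff, ← hD, map_mul]

end MvPolynomial

theorem prod_pow_dvd_iff_of_pairwise_not_associated {α ι : Type*} [CommMonoidWithZero α]
    [DecompositionMonoid α] [Fintype ι] {f : ι → α} (hirr : ∀ i, Irreducible (f i))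
    (hassoc : ∀ i j, i ≠ j → ¬ Associated (f i) (f j)) (k : ι → ℕ) (a : α) :
    (∏ i, f i ^ k i) ∣ a ↔ ∀ i, 0 < k i → f i ^ k i ∣ a := by
  refine ⟨fun h i _ => (Finset.dvd_prod_of_mem _ (Finset.mem_univ i)).trans h, fun h => ?_⟩
  refine Fintype.prod_dvd_of_isRelPrime (fun i j hij => ?_) fun i => ?_
  · have : IsRelPrime (f i) (f j) := (hirr i).isRelPrime_iff_not_dvd.mpr fun hdvd =>
      hassoc i j hij ((hirr i).associated_of_dvd (hirr j) hdvd)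
    exact this.pow_left.pow_right
  · rcases (k i).eq_zero_or_pos with h0 | hpos
    · simp [h0]
    · exact h i hpos

theorem additive_of_eq_mul_add {G K V : Type*} [Group G] [CommRing K] [IsDomain K]
    [AddCommMonoid V] [Module K V] (ρ : G →* (V ≃ₗ[K] V)) (X : G →* Kˣ) {F h : V → K} {Φ : G → K}
    (hF : ∀ g v, F (ρ g v) = X g * F v) (hF0 : ∃ v, F v ≠ 0)
    (hΦ : ∀ g v, h (ρ g v) = X g * (F v * Φ g + h v)) (g₁ g₂ : G) :
    Φ (g₁ * g₂) = Φ g₁ + Φ g₂ := by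
  obtain ⟨v, hv⟩ := hF0
  have hX : (X g₁ * X g₂ : K) ≠ 0 := mul_ne_zero (X g₁).ne_zero (X g₂).ne_zero
  have hscaled : (X g₁ * X g₂ : K) * (F v * Φ (g₁ * g₂)) = X g₁ * X g₂ * (F v * (Φ g₁ + Φ g₂)) := by
    have := hΦ (g₁ * g₂) v
    rw [map_mul, LinearEquiv.mul_apply, hΦ g₁, hF, hΦ g₂, map_mul, Units.val_mul] at this
    linear_combination -this
  exact mul_left_cancel₀ hv (mul_left_cancel₀ hX hscaled)

theorem exists_additive_iff_forall_exists_eval_eq_mul {σ K G : Type*} [Fintype σ] [Field K]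
    [Infinite K] [Group G] (ρ : G →* ((σ → K) ≃ₗ[K] (σ → K))) (X : G →* Kˣ)
    {F h : MvPolynomial σ K} {N : ℕ} (hF0 : F ≠ 0) (hFhom : F.IsHomogeneous N)
    (hhom : h.IsHomogeneous N) (hFrel : ∀ g v, eval (ρ g v) F = X g * eval v F) :
    (∃ Φ : G → K, (∀ g₁ g₂, Φ (g₁ * g₂) = Φ g₁ + Φ g₂) ∧
        ∀ g v, eval (ρ g v) h = X g * (eval v F * Φ g + eval v h)) ↔
      ∀ g, ∃ q : MvPolynomial σ K, ∀ v,
        eval (ρ g v) h - X g * eval v h = eval v F * eval v q := by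
  constructor
  · rintro ⟨Φ, -, hΦ⟩ g
    exact ⟨C (X g * Φ g), fun v => by rw [hΦ, eval_C]; ring⟩
  intro hdvd
  have hconst : ∀ g, ∃ c : K, ∀ v, eval (ρ g v) h - X g * eval v h = eval v F * c := by
    intro g
    obtain ⟨H, hHhom, hH⟩ := exists_isHomogeneous_eval_eq_eval_linearMap hhom (ρ g).toLinearMap
    have hD : ∀ v, eval v (H - C (X g : K) * h) = eval (ρ g v) h - X g * eval v h := by
      simp [hH]
    obtain ⟨c, hc⟩ := hFhom.exists_eq_mul_C_of_dvd hF0 (hHhom.sub (hhom.C_mul _))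
      ((exists_eval_eq_mul_iff_dvd hD).mp (hdvd g))
    exact ⟨c, fun v => by rw [← hD, hc, eval_mul, eval_C]⟩
  choose c hc using hconst
  have hΦ : ∀ g v, eval (ρ g v) h = X g * (eval v F * (c g / X g) + eval v h) := by
    intro g v
    rw [mul_add, mul_left_comm, mul_div_cancel₀ _ (X g).ne_zero, ← hc]
    ring
  have hF0' : ∃ v, eval v F ≠ 0 := by
    contrapose! hF0
    exact funext fun v => by simp [hF0 v]
  exact ⟨fun g => c g / X g,
    additive_of_eq_mul_add ρ X hFrel hF0' (h := fun v => eval v h) hΦ, hΦ⟩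

theorem additive_relative_invariant_tfae_general
    (n : ℕ) {G : Type*} [Group G]
    (ρ : G →* ((Fin n → ℂ) ≃ₗ[ℂ] (Fin n → ℂ)))
    (r : ℕ) (f : Fin r → MvPolynomial (Fin n) ℂ) (d : Fin r → ℕ)
    (χ : Fin r → (G →* ℂˣ))
    (hirr : ∀ i, Irreducible (f i))
    (hhom : ∀ i, (f i).IsHomogeneous (d i))
    (hrel : ∀ i (g : G) (v : Fin n → ℂ),
      eval (ρ g v) (f i) = (χ i g : ℂ) * eval v (f i))
    (hassoc : ∀ i j, i ≠ j → ¬ Associated (f i) (f j))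
    (k : Fin r → ℕ)
    (F : MvPolynomial (Fin n) ℂ) (hF : F = ∏ i, (f i) ^ (k i))
    (h₁ : MvPolynomial (Fin n) ℂ)
    (hh₁hom : h₁.IsHomogeneous (∑ i, k i * d i)) :
    ((∃ Φ : G → ℂ, (∀ g₁ g₂ : G, Φ (g₁ * g₂) = Φ g₁ + Φ g₂) ∧
        ∀ (g : G) (v : Fin n → ℂ),
          eval (ρ g v) h₁ =
            (∏ i, ((χ i g : ℂ)) ^ (k i)) * (eval v F * Φ g + eval v h₁)) ↔
      (∀ i, 0 < k i → ∀ g : G, ∃ q : MvPolynomial (Fin n) ℂ,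
        ∀ v : Fin n → ℂ,
          eval (ρ g v) h₁ - (∏ j, ((χ j g : ℂ)) ^ (k j)) * eval v h₁ =
            (eval v (f i)) ^ (k i) * eval v q)) ∧
    ((∀ i, 0 < k i → ∀ g : G, ∃ q : MvPolynomial (Fin n) ℂ,
        ∀ v : Fin n → ℂ,
          eval (ρ g v) h₁ - (∏ j, ((χ j g : ℂ)) ^ (k j)) * eval v h₁ =
            (eval v (f i)) ^ (k i) * eval v q) ↔
      (∀ g : G, ∃ q : MvPolynomial (Fin n) ℂ,
        ∀ v : Fin n → ℂ,
          eval (ρ g v) h₁ - (∏ j, ((χ j g : ℂ)) ^ (k j)) * eval v h₁ =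
            eval v F * eval v q)) := by
  set X : G →* ℂˣ := ∏ i, χ i ^ k i
  have hX : ∀ g, (X g : ℂ) = ∏ i, (χ i g : ℂ) ^ k i := by simp [X]
  simp only [← hX]
  have hFrel : ∀ g v, eval (ρ g v) F = X g * eval v F := by
    simp [hF, hX, hrel, mul_pow, Finset.prod_mul_distrib]
  have hFhom : F.IsHomogeneous (∑ i, k i * d i) := by
    simpa only [hF, mul_comm] using IsHomogeneous.prod _ _ _ fun i _ => (hhom i).pow (k i)
  have hF0 : F ≠ 0 := hF ▸ Finset.prod_ne_zero_iff.mpr fun i _ => pow_ne_zero _ (hirr i).ne_zero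
  have h23 : (∀ i, 0 < k i → ∀ g, ∃ q : MvPolynomial (Fin n) ℂ, ∀ v,
        eval (ρ g v) h₁ - X g * eval v h₁ = eval v (f i) ^ k i * eval v q) ↔
      ∀ g, ∃ q : MvPolynomial (Fin n) ℂ, ∀ v,
        eval (ρ g v) h₁ - X g * eval v h₁ = eval v F * eval v q := by
    choose H _ hH using fun g =>
      exists_isHomogeneous_eval_eq_eval_linearMap hh₁hom (ρ g).toLinearMap
    have hD : ∀ g v, eval v (H g - C (X g : ℂ) * h₁) = eval (ρ g v) h₁ - X g * eval v h₁ := by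
      simp [hH]
    simp only [← map_pow, exists_eval_eq_mul_iff_dvd (hD _), hF,
      prod_pow_dvd_iff_of_pairwise_not_associated hirr hassoc]
    exact ⟨fun h g i hi => h i hi g, fun h i hi g => h g i hi⟩
  have h13 := exists_additive_iff_forall_exists_eval_eq_mul ρ X hF0 hFhom hh₁hom hFrel
  exact ⟨h13.trans h23.symm, h23⟩

/-- Characterization of additive relative invariants `h₁ / ∏ᵢ fᵢ^{kᵢ}`: the existence of an
additive `Φ` satisfying the global equation is equivalent to `h₁ ∘ ρ(g) − X(g)·h₁` agreeing
to order `kᵢ − 1` on each `V(fᵢ)` with `kᵢ > 0`, and to its divisibility by `F = ∏ᵢ fᵢ^{kᵢ}`. -/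
theorem additive_relative_invariant_tfae
    (n : ℕ) {G : Type*} [Group G]
    (ρ : G →* ((Fin n → ℂ) ≃ₗ[ℂ] (Fin n → ℂ)))
    (r : ℕ) (f : Fin r → MvPolynomial (Fin n) ℂ) (d : Fin r → ℕ)
    (χ : Fin r → (G →* ℂˣ))
    (hirr : ∀ i, Irreducible (f i))
    (hhom : ∀ i, (f i).IsHomogeneous (d i))
    (hrel : ∀ i (g : G) (v : Fin n → ℂ),
      eval (ρ g v) (f i) = (χ i g : ℂ) * eval v (f i))
    (hassoc : ∀ i j, i ≠ j → ¬ Associated (f i) (f j))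
    (k : Fin r → ℕ)
    (F : MvPolynomial (Fin n) ℂ) (hF : F = ∏ i, (f i) ^ (k i))
    (h₁ : MvPolynomial (Fin n) ℂ)
    (hh₁hom : h₁.IsHomogeneous (∑ i, k i * d i))
    (hrp : IsRelPrime h₁ F) :
    ((∃ Φ : G → ℂ, (∀ g₁ g₂ : G, Φ (g₁ * g₂) = Φ g₁ + Φ g₂) ∧
        ∀ (g : G) (v : Fin n → ℂ),
          eval (ρ g v) h₁ =
            (∏ i, ((χ i g : ℂ)) ^ (k i)) * (eval v F * Φ g + eval v h₁)) ↔
      (∀ i, 0 < k i → ∀ g : G, ∃ q : MvPolynomial (Fin n) ℂ,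
        ∀ v : Fin n → ℂ,
          eval (ρ g v) h₁ - (∏ j, ((χ j g : ℂ)) ^ (k j)) * eval v h₁ =
            (eval v (f i)) ^ (k i) * eval v q)) ∧
    ((∀ i, 0 < k i → ∀ g : G, ∃ q : MvPolynomial (Fin n) ℂ,
        ∀ v : Fin n → ℂ,
          eval (ρ g v) h₁ - (∏ j, ((χ j g : ℂ)) ^ (k j)) * eval v h₁ =
            (eval v (f i)) ^ (k i) * eval v q) ↔
      (∀ g : G, ∃ q : MvPolynomial (Fin n) ℂ,
        ∀ v : Fin n → ℂ,
          eval (ρ g v) h₁ - (∏ j, ((χ j g : ℂ)) ^ (k j)) * eval v h₁ =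
            eval v F * eval v q)) :=
  additive_relative_invariant_tfae_general n ρ r f d χ hirr hhom hrel hassoc k F hF h₁ hh₁hom
end

section
/- Let n be a natural number, G a group, and ρ : G →* (V ≃ₗ[ℂ] V) a linear action of G on V = (Fin n → ℂ). Let f, h₁ ∈ MvPolynomial (Fin n) ℂ be homogeneous of the same degree d, with f nonzero and squarefree, h₁ and f relatively prime (IsRelPrime h₁ f), and suppose f(ρ(g)v) = χ(g)·f(v) for all g ∈ G, v ∈ V, where χ : G →* ℂˣ. For ε ∈ ℂ let V_ε = {x ∈ V : f(x) = 0 ∧ h₁(x) = ε}. Then there exists an additive Φ : G → ℂ with h₁(ρ(g)v) = χ(g)·(f(v)·Φ(g) + h₁(v)) for all g, v, if and only if ρ(g) maps V_ε onto V_{χ(g)·ε} for every g ∈ G and every ε ∈ ℂ. -/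
/-!
If `h₁ (ρ g v) = χ g (f v · Φ g + h₁ v)`, then on `{f = 0}` the map `ρ g` multiplies `h₁` by
`χ g`, and since `f` is a relative invariant, `ρ g` maps `{f = 0}` onto itself; hence it carries
`V_ε` onto `V_{χ g ε}`. Conversely, if the level sets are permuted, the form
`h₁ ∘ ρ g - χ g · h₁` of degree `d` vanishes on `{f = 0}`, so by the Nullstellensatz it is
divisible by the squarefree `f`, and comparing degrees the quotient is a constant `c g`. Put
`Φ g = c g / χ g`; evaluating the resulting identity for `g₁ g₂` at a point where `f ≠ 0` shows
that `Φ` is additive.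
-/

open MvPolynomial
open scoped Matrix

namespace MvPolynomial

variable {σ R : Type*}

theorem eq_C_of_isHomogeneous_mul [CommRing R] [IsDomain R] {d : ℕ} {f q : MvPolynomial σ R}
    (hf : f.IsHomogeneous d) (hf0 : f ≠ 0) (hfq : (f * q).IsHomogeneous d) :
    q = C (q.coeff 0) := by
  rw [← totalDegree_eq_zero_iff_eq_C]
  rcases eq_or_ne q 0 with rfl | hq0
  · simp
  have := hfq.totalDegree (mul_ne_zero hf0 hq0)
  rw [totalDegree_mul_of_isDomain hf0 hq0, hf.totalDegree hf0] at this
  omega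

theorem dvd_of_squarefree_of_eval_eq_zero [Field R] [IsAlgClosed R] [Finite σ]
    {f p : MvPolynomial σ R} (hf : Squarefree f) (hp : ∀ x, eval x f = 0 → eval x p = 0) :
    f ∣ p := by
  have hmem : p ∈ vanishingIdeal R (zeroLocus R (Ideal.span {f})) := fun x hx =>
    hp x (hx f (Ideal.subset_span rfl))
  rw [vanishingIdeal_zeroLocus_eq_radical] at hmem
  obtain ⟨k, hk⟩ := hmem
  exact hf.isRadical k p (Ideal.mem_span_singleton.1 hk)

theorem exists_eq_C_mul_of_eval_eq_zero [Field R] [IsAlgClosed R] [Finite σ] {d : ℕ}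
    {f p : MvPolynomial σ R} (hf : Squarefree f) (hfd : f.IsHomogeneous d)
    (hpd : p.IsHomogeneous d) (hp : ∀ x, eval x f = 0 → eval x p = 0) :
    ∃ c, p = C c * f := by
  obtain ⟨q, rfl⟩ := dvd_of_squarefree_of_eval_eq_zero hf hp
  exact ⟨q.coeff 0, by rw [mul_comm, ← eq_C_of_isHomogeneous_mul hfd hf.ne_zero hpd]⟩

section LinearSubst

variable {τ : Type*} [CommSemiring R] [Fintype σ] (M : Matrix τ σ R)

noncomputable def linearSubst : MvPolynomial τ R →ₐ[R] MvPolynomial σ R :=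
  bind₁ fun j => ∑ i, C (M j i) * X i

theorem eval_linearSubst (x : σ → R) (p : MvPolynomial τ R) :
    eval x (linearSubst M p) = eval (M *ᵥ x) p := by
  have hM : (fun j => eval x (∑ i, C (M j i) * X i)) = M *ᵥ x := by
    ext j
    simp [Matrix.mulVec, dotProduct]
  exact (eval₂Hom_bind₁ _ _ _ p).trans (congrArg (eval · p) hM)

theorem IsHomogeneous.linearSubst {d : ℕ} {p : MvPolynomial τ R} (hp : p.IsHomogeneous d) :
    (linearSubst M p).IsHomogeneous d := by
  have := hp.aeval (fun j => ∑ i, C (M j i) * X i) fun j =>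
    IsHomogeneous.sum _ _ _ fun i _ => isHomogeneous_C_mul_X (M j i) i
  rwa [one_mul, aeval_eq_bind₁] at this

end LinearSubst

theorem exists_eval_eq_add_mul_of_eval_eq_zero [Field R] [IsAlgClosed R] [Fintype σ]
    [DecidableEq σ] {d : ℕ} {f h : MvPolynomial σ R} (hf : Squarefree f)
    (hfd : f.IsHomogeneous d) (hhd : h.IsHomogeneous d) (L : (σ → R) →ₗ[R] σ → R) (a : R)
    (hL : ∀ x, eval x f = 0 → eval (L x) h = a * eval x h) :
    ∃ c, ∀ x, eval (L x) h = a * eval x h + c * eval x f := by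
  set M := LinearMap.toMatrix' L
  obtain ⟨c, hc⟩ := exists_eq_C_mul_of_eval_eq_zero (p := linearSubst M h - C a * h) hf hfd
    ((hhd.linearSubst M).sub (hhd.C_mul a)) fun x hx => by
      rw [map_sub, map_mul, eval_C, eval_linearSubst, LinearMap.toMatrix'_mulVec, hL x hx,
        sub_self]
  refine ⟨c, fun x => ?_⟩
  have := congrArg (eval x) hc
  rw [map_sub, map_mul, map_mul, eval_C, eval_C, eval_linearSubst,
    LinearMap.toMatrix'_mulVec] at this
  linear_combination this

end MvPolynomial

section RelativeInvariant

variable {α K : Type*} [CommRing K] {F H : α → K}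

theorem image_setOf_eq_of_eq_mul (e : α ≃ α) (a : Kˣ) (φ : K) (hF : ∀ v, F (e v) = a * F v)
    (hH : ∀ v, H (e v) = a * (F v * φ + H v)) (ε : K) :
    e '' {v | F v = 0 ∧ H v = ε} = {v | F v = 0 ∧ H v = a * ε} := by
  ext w
  constructor
  · rintro ⟨v, ⟨hFv, rfl⟩, rfl⟩
    exact ⟨by rw [hF, hFv, mul_zero], by rw [hH, hFv, zero_mul, zero_add]⟩
  · rintro ⟨hFw, hHw⟩
    have hF' : F (e.symm w) = 0 := by
      rw [← a.mul_right_eq_zero, ← hF, e.apply_symm_apply, hFw]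
    refine ⟨e.symm w, ⟨hF', ?_⟩, e.apply_symm_apply w⟩
    rw [← a.mul_right_inj, ← hHw, ← e.apply_symm_apply w, hH, hF', e.apply_symm_apply, zero_mul,
      zero_add]

variable {G V : Type*} [Group G] [AddCommGroup V] [Module K V]

def IsRelInvariant (ρ : G →* (V ≃ₗ[K] V)) (χ : G →* Kˣ) (F : V → K) : Prop :=
  ∀ g v, F (ρ g v) = χ g * F v

theorem IsRelInvariant.map_mul_eq_add [IsDomain K] {ρ : G →* (V ≃ₗ[K] V)} {χ : G →* Kˣ}
    {F H : V → K} (hF : IsRelInvariant ρ χ F) {Φ : G → K}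
    (hH : ∀ g v, H (ρ g v) = χ g * (F v * Φ g + H v)) {v₀ : V} (hv₀ : F v₀ ≠ 0) (g₁ g₂ : G) :
    Φ (g₁ * g₂) = Φ g₁ + Φ g₂ := by
  have key := hH (g₁ * g₂) v₀
  rw [map_mul, LinearEquiv.mul_apply, hH, hH, hF, map_mul, Units.val_mul] at key
  have : ((χ g₁ * χ g₂ : Kˣ) : K) * F v₀ * (Φ (g₁ * g₂) - (Φ g₁ + Φ g₂)) = 0 := by
    push_cast
    linear_combination -key
  simpa [hv₀, sub_eq_zero] using this

end RelativeInvariant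

theorem additive_relative_invariant_iff_permutes_level_sets_general
    (n : ℕ) {G : Type*} [Group G]
    (ρ : G →* ((Fin n → ℂ) ≃ₗ[ℂ] (Fin n → ℂ)))
    (d : ℕ) (f h₁ : MvPolynomial (Fin n) ℂ)
    (hsq : Squarefree f)
    (hfhom : f.IsHomogeneous d) (hh₁hom : h₁.IsHomogeneous d)
    (χ : G →* ℂˣ)
    (hrel : ∀ (g : G) (v : Fin n → ℂ), eval (ρ g v) f = (χ g : ℂ) * eval v f) :
    (∃ Φ : G → ℂ, (∀ g₁ g₂ : G, Φ (g₁ * g₂) = Φ g₁ + Φ g₂) ∧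
      ∀ (g : G) (v : Fin n → ℂ),
        eval (ρ g v) h₁ = (χ g : ℂ) * (eval v f * Φ g + eval v h₁)) ↔
    (∀ (g : G) (ε : ℂ),
      (fun v => ρ g v) '' {v : Fin n → ℂ | eval v f = 0 ∧ eval v h₁ = ε} =
        {v : Fin n → ℂ | eval v f = 0 ∧ eval v h₁ = (χ g : ℂ) * ε}) := by
  constructor
  · rintro ⟨Φ, -, hΦ⟩ g
    exact image_setOf_eq_of_eq_mul (ρ g).toEquiv (χ g) (Φ g) (hrel g) (hΦ g)
  · intro hperm
    have hvan (g : G) (v : Fin n → ℂ) (hv : eval v f = 0) :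
        eval (ρ g v) h₁ = χ g * eval v h₁ :=
      ((hperm g _).subset ⟨v, ⟨hv, rfl⟩, rfl⟩).2
    choose c hc using fun g =>
      exists_eval_eq_add_mul_of_eval_eq_zero hsq hfhom hh₁hom (ρ g).toLinearMap (χ g) (hvan g)
    have hΦ (g : G) (v : Fin n → ℂ) :
        eval (ρ g v) h₁ = χ g * (eval v f * (c g / χ g) + eval v h₁) := by
      rw [← LinearEquiv.coe_coe, hc g v]
      field_simp
      ring
    obtain ⟨v₀, hv₀⟩ : ∃ v, eval v f ≠ 0 := by
      by_contra! h
      exact hsq.ne_zero (funext fun v => by simp [h v])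
    exact ⟨_, IsRelInvariant.map_mul_eq_add (F := (eval · f)) (H := (eval · h₁)) hrel hΦ hv₀,
      hΦ⟩

/-- Geometric interpretation: for `f` reduced, `h₁/f` is an additive relative invariant
if and only if `ρ(g)` maps `V_ε = {f = 0, h₁ = ε}` onto `V_{χ(g)·ε}` for all `g`, `ε`. -/
theorem additive_relative_invariant_iff_permutes_level_sets
    (n : ℕ) {G : Type*} [Group G]
    (ρ : G →* ((Fin n → ℂ) ≃ₗ[ℂ] (Fin n → ℂ)))
    (d : ℕ) (f h₁ : MvPolynomial (Fin n) ℂ)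
    (hf0 : f ≠ 0) (hsq : Squarefree f)
    (hfhom : f.IsHomogeneous d) (hh₁hom : h₁.IsHomogeneous d)
    (hrp : IsRelPrime h₁ f)
    (χ : G →* ℂˣ)
    (hrel : ∀ (g : G) (v : Fin n → ℂ), eval (ρ g v) f = (χ g : ℂ) * eval v f) :
    (∃ Φ : G → ℂ, (∀ g₁ g₂ : G, Φ (g₁ * g₂) = Φ g₁ + Φ g₂) ∧
      ∀ (g : G) (v : Fin n → ℂ),
        eval (ρ g v) h₁ = (χ g : ℂ) * (eval v f * Φ g + eval v h₁)) ↔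
    (∀ (g : G) (ε : ℂ),
      (fun v => ρ g v) '' {v : Fin n → ℂ | eval v f = 0 ∧ eval v h₁ = ε} =
        {v : Fin n → ℂ | eval v f = 0 ∧ eval v h₁ = (χ g : ℂ) * ε}) :=
  additive_relative_invariant_iff_permutes_level_sets_general n ρ d f h₁ hsq hfhom hh₁hom χ hrel
end

section
/- Let n be a natural number, G a group, and ρ : G →* (V ≃ₗ[ℂ] V) a linear action of G on V = (Fin n → ℂ). (i) Let f ∈ MvPolynomial (Fin n) ℂ and χ : G → ℂˣ satisfy f(ρ(g)w) = χ(g)·f(w) for all g ∈ G, w ∈ V. If v ∈ V satisfies f(v) ≠ 0, then χ(g) = 1 for every g with ρ(g)v = v. (ii) Let h₁, f₁ ∈ MvPolynomial (Fin n) ℂ, χ : G → ℂˣ and Φ : G → ℂ satisfy h₁(ρ(g)w) = χ(g)·(f₁(w)·Φ(g) + h₁(w)) for all g ∈ G, w ∈ V. Then for every v ∈ V the following two conditions are equivalent: (h₁(v) = 0, or χ(g) = 1 for every g with ρ(g)v = v) ⇔ (f₁(v) = 0, or Φ(g) = 0 for every g with ρ(g)v = v). -/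
open MvPolynomial

/-- The vanishing lemma: (i) if `f` is a relative invariant with character `χ` and
`f(v) ≠ 0`, then `χ` is trivial on the stabilizer of `v`; (ii) for an additive relative
invariant satisfying the global equation, the two vanishing conditions are equivalent. -/
theorem vanishing_lemma_for_relative_invariants
    (n : ℕ) {G : Type*} [Group G]
    (ρ : G →* ((Fin n → ℂ) ≃ₗ[ℂ] (Fin n → ℂ))) :
    (∀ (f : MvPolynomial (Fin n) ℂ) (χ : G → ℂˣ),
      (∀ (g : G) (w : Fin n → ℂ), eval (ρ g w) f = (χ g : ℂ) * eval w f) →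
      ∀ v : Fin n → ℂ, eval v f ≠ 0 → ∀ g : G, ρ g v = v → χ g = 1) ∧
    (∀ (h₁ f₁ : MvPolynomial (Fin n) ℂ) (χ : G → ℂˣ) (Φ : G → ℂ),
      (∀ (g : G) (w : Fin n → ℂ),
        eval (ρ g w) h₁ = (χ g : ℂ) * (eval w f₁ * Φ g + eval w h₁)) →
      ∀ v : Fin n → ℂ,
        ((eval v h₁ = 0 ∨ ∀ g : G, ρ g v = v → χ g = 1) ↔
         (eval v f₁ = 0 ∨ ∀ g : G, ρ g v = v → Φ g = 0))) := by
  constructor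
  · intro f χ hrel v hv g hg
    have h := hrel g v
    rw [hg] at h
    have h2 : (χ g : ℂ) * eval v f = 1 * eval v f := by rw [one_mul, ← h]
    exact Units.ext (mul_right_cancel₀ hv h2)
  · intro h₁ f₁ χ Φ hrel v
    have key : ∀ g : G, ρ g v = v →
        eval v h₁ = (χ g : ℂ) * (eval v f₁ * Φ g + eval v h₁) := by
      intro g hg
      have h := hrel g v
      rwa [hg] at h
    have prod0 : ∀ g : G, ρ g v = v →
        ((χ g : ℂ) = 1 ∨ eval v h₁ = 0) → eval v f₁ * Φ g = 0 := by
      intro g hg hc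
      have h := key g hg
      rcases hc with hc | hc
      · rw [hc, one_mul] at h
        linear_combination -h
      · rw [hc] at h
        have h2 : (χ g : ℂ) * (eval v f₁ * Φ g) = 0 := by linear_combination -h
        exact (mul_eq_zero.mp h2).resolve_left (Units.ne_zero _)
    have chi1 : ∀ g : G, ρ g v = v →
        (eval v f₁ * Φ g = 0) → eval v h₁ ≠ 0 → χ g = 1 := by
      intro g hg hz hne
      have h := key g hg
      rw [hz, zero_add] at h
      have h2 : (χ g : ℂ) * eval v h₁ = 1 * eval v h₁ := by rw [one_mul, ← h]
      exact Units.ext (mul_right_cancel₀ hne h2)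
    constructor
    · intro hl
      by_cases hf : eval v f₁ = 0
      · exact Or.inl hf
      · refine Or.inr fun g hg => ?_
        have : eval v f₁ * Φ g = 0 := by
          rcases hl with h0 | hχ
          · exact prod0 g hg (Or.inr h0)
          · exact prod0 g hg (Or.inl (by rw [hχ g hg]; rfl))
        exact (mul_eq_zero.mp this).resolve_left hf
    · intro hr
      by_cases hh : eval v h₁ = 0
      · exact Or.inl hh
      · refine Or.inr fun g hg => ?_
        have hz : eval v f₁ * Φ g = 0 := by
          rcases hr with h0 | hΦ
          · rw [h0, zero_mul]
          · rw [hΦ g hg, mul_zero]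
        exact chi1 g hg hz hh
end

section
/- Let n be a natural number, G a group, and ρ : G →* (V ≃ₗ[ℂ] V) a linear action of G on V = (Fin n → ℂ). Let r be a natural number, and for each j ∈ Fin r let fⱼ ∈ MvPolynomial (Fin n) ℂ and χⱼ : G → ℂˣ satisfy fⱼ(ρ(g)v) = χⱼ(g)·fⱼ(v) for all g, v. Fix i ∈ Fin r and a point v* ∈ V with fᵢ(v*) = 0 and fⱼ(v*) ≠ 0 for every j ≠ i. Then: (1) for every j ≠ i and every g ∈ G with ρ(g)v* = v*, χⱼ(g) = 1; (2) if k : Fin r → ℕ with kᵢ = 0, and h₁ ∈ MvPolynomial (Fin n) ℂ and Φ : G → ℂ satisfy h₁(ρ(g)v) = (∏ⱼ χⱼ(g)^{kⱼ})·((∏ⱼ fⱼ(v)^{kⱼ})·Φ(g) + h₁(v)) for all g ∈ G, v ∈ V, then Φ(g) = 0 for every g ∈ G with ρ(g)v* = v*. -/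
open MvPolynomial

namespace Finset

variable {ι M : Type*} (s : Finset ι) {a : ι → M} {k : ι → ℕ}

theorem prod_pow_eq_one_of_exponent_ne_zero [CommMonoid M] (h : ∀ j, k j ≠ 0 → a j = 1) :
    ∏ j ∈ s, a j ^ k j = 1 :=
  prod_eq_one fun j _ => by
    by_cases hk : k j = 0
    · rw [hk, pow_zero]
    · rw [h j hk, one_pow]

theorem prod_pow_ne_zero_of_exponent_ne_zero [CommMonoidWithZero M] [NoZeroDivisors M]
    [Nontrivial M] (h : ∀ j, k j ≠ 0 → a j ≠ 0) : ∏ j ∈ s, a j ^ k j ≠ 0 :=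
  prod_ne_zero_iff.2 fun j _ => by
    by_cases hk : k j = 0
    · rw [hk, pow_zero]; exact one_ne_zero
    · exact pow_ne_zero _ (h j hk)

end Finset

theorem vanishing_at_generic_point_of_component_general
    (n : ℕ) {G : Type*} [Group G]
    (ρ : G →* ((Fin n → ℂ) ≃ₗ[ℂ] (Fin n → ℂ)))
    (r : ℕ) (f : Fin r → MvPolynomial (Fin n) ℂ) (χ : Fin r → G → ℂˣ)
    (hrel : ∀ j (g : G) (v : Fin n → ℂ),
      eval (ρ g v) (f j) = (χ j g : ℂ) * eval v (f j))
    (i : Fin r) (vstar : Fin n → ℂ)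
    (hvj : ∀ j, j ≠ i → eval vstar (f j) ≠ 0) :
    (∀ j, j ≠ i → ∀ g : G, ρ g vstar = vstar → χ j g = 1) ∧
    (∀ (k : Fin r → ℕ), k i = 0 →
      ∀ (h₁ : MvPolynomial (Fin n) ℂ) (Φ : G → ℂ),
      (∀ (g : G) (v : Fin n → ℂ),
        eval (ρ g v) h₁ =
          (∏ j, ((χ j g : ℂ)) ^ (k j)) *
            ((∏ j, (eval v (f j)) ^ (k j)) * Φ g + eval v h₁)) →
      ∀ g : G, ρ g vstar = vstar → Φ g = 0) := by
  have hχ : ∀ j, j ≠ i → ∀ g : G, ρ g vstar = vstar → χ j g = 1 := by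
    intro j hj g hg
    have hfix : (χ j g : ℂ) * eval vstar (f j) = eval vstar (f j) := by
      rw [← hrel, hg]
    exact Units.val_eq_one.1 ((mul_eq_right₀ (hvj j hj)).1 hfix)
  refine ⟨hχ, fun k hk h₁ Φ hadd g hg => ?_⟩
  have hne : ∀ j, k j ≠ 0 → j ≠ i := fun j hj hji => hj (hji ▸ hk)
  have hχk : ∏ j, (χ j g : ℂ) ^ k j = 1 :=
    Finset.univ.prod_pow_eq_one_of_exponent_ne_zero fun j hj => by
      rw [hχ j (hne j hj) g hg, Units.val_one]
  have hfk : ∏ j, eval vstar (f j) ^ k j ≠ 0 :=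
    Finset.univ.prod_pow_ne_zero_of_exponent_ne_zero fun j hj => hvj j (hne j hj)
  have hΦ : (∏ j, eval vstar (f j) ^ k j) * Φ g = 0 := by
    have hv := hadd g vstar
    rw [hg, hχk, one_mul] at hv
    exact right_eq_add.1 hv
  exact (mul_eq_zero.1 hΦ).resolve_left hfk

/-- At a generic point `v*` of the hypersurface component `fᵢ = 0` (so `fⱼ(v*) ≠ 0` for
`j ≠ i`): (1) the stabilizer of `v*` lies in `ker χⱼ` for all `j ≠ i`; (2) if `kᵢ = 0`
in an additive relative invariant `h₁ / ∏ⱼ fⱼ^{kⱼ}` with additive function `Φ`, then the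
stabilizer of `v*` lies in `ker Φ`. -/
theorem vanishing_at_generic_point_of_component
    (n : ℕ) {G : Type*} [Group G]
    (ρ : G →* ((Fin n → ℂ) ≃ₗ[ℂ] (Fin n → ℂ)))
    (r : ℕ) (f : Fin r → MvPolynomial (Fin n) ℂ) (χ : Fin r → G → ℂˣ)
    (hrel : ∀ j (g : G) (v : Fin n → ℂ),
      eval (ρ g v) (f j) = (χ j g : ℂ) * eval v (f j))
    (i : Fin r) (vstar : Fin n → ℂ)
    (hvi : eval vstar (f i) = 0)
    (hvj : ∀ j, j ≠ i → eval vstar (f j) ≠ 0) :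
    (∀ j, j ≠ i → ∀ g : G, ρ g vstar = vstar → χ j g = 1) ∧
    (∀ (k : Fin r → ℕ), k i = 0 →
      ∀ (h₁ : MvPolynomial (Fin n) ℂ) (Φ : G → ℂ),
      (∀ (g : G) (v : Fin n → ℂ),
        eval (ρ g v) h₁ =
          (∏ j, ((χ j g : ℂ)) ^ (k j)) *
            ((∏ j, (eval v (f j)) ^ (k j)) * Φ g + eval v h₁)) →
      ∀ g : G, ρ g vstar = vstar → Φ g = 0) :=
  vanishing_at_generic_point_of_component_general n ρ r f χ hrel i vstar hvj
end

section
/- Let G be a topological group, n a natural number, and ρ : G →* (V ≃ₗ[ℂ] V) a linear action of G on V = (Fin n → ℂ). Let r be a natural number, and for each j ∈ Fin r let fⱼ ∈ MvPolynomial (Fin n) ℂ and χⱼ : G →* ℂˣ satisfy fⱼ(ρ(g)v) = χⱼ(g)·fⱼ(v) for all g, v, with χᵢ continuous (ℂˣ = Units ℂ with its standard topology). Fix i ∈ Fin r and a point v* ∈ V with fᵢ(v*) = 0 and fⱼ(v*) ≠ 0 for every j ≠ i. Suppose k : Fin r → ℕ with kᵢ > 0, and suppose h₁ ∈ MvPolynomial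 (Fin n) ℂ and Φ : G → ℂ satisfy h₁(v*) ≠ 0 and h₁(ρ(g)v) = (∏ⱼ χⱼ(g)^{kⱼ})·((∏ⱼ fⱼ(v)^{kⱼ})·Φ(g) + h₁(v)) for all g ∈ G, v ∈ V. Then χᵢ(g) = 1 for every g in the connected component of the identity of the stabilizer set {g ∈ G : ρ(g)v* = v*}, taken with the subspace topology from G. -/
/-!
At a point `v*` fixed by `g`, the defining identity of the additive relative invariant loses its
`Φ`-term, because the denominator `∏ⱼ fⱼ^{kⱼ}` vanishes there (`kᵢ > 0`, `fᵢ(v*) = 0`); since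
`h₁(v*) ≠ 0` this forces `∏ⱼ χⱼ(g)^{kⱼ} = 1`. For `j ≠ i` the relative invariant `fⱼ` does not
vanish at `v*`, so `χⱼ(g) = 1`, and hence `χᵢ(g)^{kᵢ} = 1`. Thus the continuous map `χᵢ` sends
the stabilizer into the finite, hence discrete, set of `kᵢ`-th roots of unity, so it is constant
on the identity component, where it takes the value `χᵢ(1) = 1`.
-/

open MvPolynomial

section RelativeInvariant

variable {G K σ ι : Type*} [Group G] [CommRing K] [Fintype ι]
  (ρ : G →* ((σ → K) ≃ₗ[K] (σ → K)))

def IsRelativeInvariant (f : MvPolynomial σ K) (χ : G →* Kˣ) : Prop :=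
  ∀ g v, eval (ρ g v) f = χ g * eval v f

variable {ρ} [IsDomain K]

theorem IsRelativeInvariant.character_eq_one_of_fixed {f : MvPolynomial σ K} {χ : G →* Kˣ}
    (hf : IsRelativeInvariant ρ f χ) {g : G} {v : σ → K} (hg : ρ g v = v)
    (hfv : eval v f ≠ 0) : χ g = 1 := by
  have h := hf g v
  rw [hg] at h
  exact Units.val_eq_one.mp (mul_right_cancel₀ hfv (h.symm.trans (one_mul _).symm))

theorem prod_character_pow_eq_one_of_fixed {f : ι → MvPolynomial σ K} {χ : ι → G →* Kˣ}
    {k : ι → ℕ} {h₁ : MvPolynomial σ K} {Φ : G → K}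
    (heq : ∀ g v, eval (ρ g v) h₁ =
      (∏ j, (χ j g : K) ^ k j) * ((∏ j, eval v (f j) ^ k j) * Φ g + eval v h₁))
    {g : G} {v : σ → K} (hg : ρ g v = v) (hden : ∏ j, eval v (f j) ^ k j = 0)
    (hh₁ : eval v h₁ ≠ 0) : ∏ j, (χ j g : K) ^ k j = 1 := by
  have h := heq g v
  rw [hg, hden, zero_mul, zero_add] at h
  exact mul_right_cancel₀ hh₁ (h.symm.trans (one_mul _).symm)

theorem character_pow_eq_one_of_fixed {f : ι → MvPolynomial σ K} {χ : ι → G →* Kˣ}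
    (hrel : ∀ j, IsRelativeInvariant ρ (f j) (χ j)) {i : ι} {v : σ → K}
    (hvi : eval v (f i) = 0) (hvj : ∀ j, j ≠ i → eval v (f j) ≠ 0)
    {k : ι → ℕ} (hk : 0 < k i) {h₁ : MvPolynomial σ K} {Φ : G → K} (hh₁ : eval v h₁ ≠ 0)
    (heq : ∀ g v, eval (ρ g v) h₁ =
      (∏ j, (χ j g : K) ^ k j) * ((∏ j, eval v (f j) ^ k j) * Φ g + eval v h₁))
    {g : G} (hg : ρ g v = v) : χ i g ^ k i = 1 := by
  have hden : ∏ j, eval v (f j) ^ k j = 0 :=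
    Finset.prod_eq_zero (Finset.mem_univ i) (by rw [hvi, zero_pow hk.ne'])
  have hother : ∀ j, j ≠ i → (χ j g : K) = 1 := fun j hj => by
    rw [(hrel j).character_eq_one_of_fixed hg (hvj j hj), Units.val_one]
  rw [← Units.val_eq_one, Units.val_pow_eq_pow_val]
  calc (χ i g : K) ^ k i
      = ∏ j, (χ j g : K) ^ k j :=
        (Finset.prod_eq_single_of_mem (f := fun j => (χ j g : K) ^ k j) i (Finset.mem_univ i)
          fun j _ hj => by rw [hother j hj, one_pow]).symm
    _ = 1 := prod_character_pow_eq_one_of_fixed heq hg hden hh₁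

end RelativeInvariant

theorem eq_of_mem_connectedComponent_of_pow_eq_one {X R : Type*} [TopologicalSpace X]
    [CommRing R] [IsDomain R] [TopologicalSpace R] [T1Space Rˣ] {φ : X → Rˣ}
    (hφ : Continuous φ) {m : ℕ} [NeZero m] (hpow : ∀ x, φ x ^ m = 1) {x y : X}
    (hy : y ∈ connectedComponent x) : φ y = φ x :=
  isPreconnected_connectedComponent.constant_of_mapsTo
    (Set.Finite.isDiscrete (inferInstanceAs (Finite (rootsOfUnity m R)))) hφ.continuousOn
    (fun z _ => (mem_rootsOfUnity m (φ z)).mpr (hpow z)) hy mem_connectedComponent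

/-- If `fᵢ` appears nontrivially (with `kᵢ > 0`) in the denominator of an additive relative
invariant `h₁ / ∏ⱼ fⱼ^{kⱼ}` written in lowest terms (so `h₁(v*) ≠ 0` at the generic point
`v*` of `fᵢ = 0`), then the identity component of the isotropy group of `v*` lies in the
kernel of `χᵢ`. -/
theorem identity_component_of_stabilizer_in_kernel
    {G : Type*} [Group G] [TopologicalSpace G]
    (n : ℕ) (ρ : G →* ((Fin n → ℂ) ≃ₗ[ℂ] (Fin n → ℂ)))
    (r : ℕ) (f : Fin r → MvPolynomial (Fin n) ℂ) (χ : Fin r → (G →* ℂˣ))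
    (hrel : ∀ j (g : G) (v : Fin n → ℂ),
      eval (ρ g v) (f j) = (χ j g : ℂ) * eval v (f j))
    (i : Fin r) (hcont : Continuous fun g => χ i g)
    (vstar : Fin n → ℂ)
    (hvi : eval vstar (f i) = 0)
    (hvj : ∀ j, j ≠ i → eval vstar (f j) ≠ 0)
    (k : Fin r → ℕ) (hk : 0 < k i)
    (h₁ : MvPolynomial (Fin n) ℂ) (Φ : G → ℂ)
    (hh₁ : eval vstar h₁ ≠ 0)
    (heq : ∀ (g : G) (v : Fin n → ℂ),
      eval (ρ g v) h₁ =
        (∏ j, ((χ j g : ℂ)) ^ (k j)) *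
          ((∏ j, (eval v (f j)) ^ (k j)) * Φ g + eval v h₁)) :
    ∀ s : {g : G // ρ g vstar = vstar},
      s ∈ connectedComponent (⟨1, by simp⟩ : {g : G // ρ g vstar = vstar}) →
      χ i s.1 = 1 := by
  intro s hs
  have : NeZero (k i) := ⟨hk.ne'⟩
  have hpow (t : {g : G // ρ g vstar = vstar}) : χ i t.1 ^ k i = 1 :=
    character_pow_eq_one_of_fixed hrel hvi hvj hk hh₁ heq t.2
  calc χ i s.1 = χ i (1 : G) :=
        eq_of_mem_connectedComponent_of_pow_eq_one (hcont.comp continuous_subtype_val) hpow hs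
    _ = 1 := map_one _
end
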